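/- arXiv:2007.13496 — 4 statements merged into one kernel-verified Lean document; each statement's English description precedes it below -/
import Mathlib

section
/- For all real numbers α > 1 and β > 0, the sum ∑_{k=0}^∞ exp(-β·α^k) is at most ln(1 + α/β) / ln(α). -/
/-!
Put `φ t = log (1 + α / t) / log α`. For `t > 0`, `exp (-t) ≤ φ t - φ (α t)`: indeed
`exp (-t) ≤ 1 / (t + 1)`, and Bernoulli's inequality with exponent `t + 1` gives
`log α ≤ (t + 1) log ((t + α) / (t + 1)) = (t + 1) (φ t - φ (α t)) log α`.
Hence the series is dominated by the telescoping sum of `φ (β α^k) - φ (β α^(k+1))`,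
and `φ ≥ 0` bounds it by `φ β`.
-/
open Real Finset

theorem log_one_add_mul_le_mul_log_one_add {s p : ℝ} (hs : 0 ≤ s) (hp : 1 ≤ p) :
    log (1 + p * s) ≤ p * log (1 + s) := by
  rw [← log_rpow (by linarith)]
  exact log_le_log (by nlinarith) (one_add_mul_self_le_rpow_one_add (by linarith) hp)

theorem exp_neg_le_inv_add_one {t : ℝ} (ht : -1 < t) : exp (-t) ≤ (t + 1)⁻¹ := by
  rw [exp_neg]
  exact inv_anti₀ (by linarith) (by linarith [add_one_le_exp t])

theorem exp_neg_mul_log_le_log_div {α t : ℝ} (hα : 1 ≤ α) (ht : 0 ≤ t) :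
    exp (-t) * log α ≤ log ((t + α) / (t + 1)) := by
  have ht1 : 0 < t + 1 := by linarith
  -- Bernoulli with exponent `t + 1` and base `1 + (α - 1) / (t + 1) = (t + α) / (t + 1)`
  have bernoulli := log_one_add_mul_le_mul_log_one_add
    (div_nonneg (sub_nonneg.2 hα) ht1.le) (le_add_of_nonneg_left ht)
  rw [mul_div_cancel₀ _ ht1.ne', add_sub_cancel, one_add_div ht1.ne',
    show t + 1 + (α - 1) = t + α by ring] at bernoulli
  calc exp (-t) * log α ≤ (t + 1)⁻¹ * log α :=
        mul_le_mul_of_nonneg_right (exp_neg_le_inv_add_one (by linarith)) (log_nonneg hα)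
    _ ≤ log ((t + α) / (t + 1)) := by
        rw [inv_mul_le_iff₀ ht1]; exact bernoulli

theorem tsum_le_of_le_sub_succ {f g : ℕ → ℝ} (hg : ∀ k, 0 ≤ g k)
    (h : ∀ k, f k ≤ g k - g (k + 1)) : ∑' k, f k ≤ g 0 := by
  by_cases hf : Summable f
  · refine hf.tsum_le_of_sum_range_le fun n => ?_
    calc ∑ k ∈ range n, f k ≤ ∑ k ∈ range n, (g k - g (k + 1)) := sum_le_sum fun k _ => h k
      _ = g 0 - g n := sum_range_sub' g n
      _ ≤ g 0 := sub_le_self _ (hg n)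
  · rw [tsum_eq_zero_of_not_summable hf]
    exact hg 0

theorem exp_neg_le_log_one_add_div_sub {α t : ℝ} (hα : 1 < α) (ht : 0 < t) :
    exp (-t) ≤ log (1 + α / t) / log α - log (1 + α / (t * α)) / log α := by
  have hα0 : 0 < α := by linarith
  rw [div_sub_div_same, le_div_iff₀ (log_pos hα), ← log_div (by positivity) (by positivity)]
  refine (exp_neg_mul_log_le_log_div hα.le ht.le).trans_eq (congrArg log ?_)
  field_simp

theorem geometric_exp_sum_bound (α β : ℝ) (hα : 1 < α) (hβ : 0 < β) :
    ∑' k : ℕ, Real.exp (-β * α ^ k) ≤ Real.log (1 + α / β) / Real.log α := by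
  have hα0 : 0 < α := by linarith
  refine (tsum_le_of_le_sub_succ (g := fun k => log (1 + α / (β * α ^ k)) / log α)
    (fun k => ?_) (fun k => ?_)).trans_eq (by simp)
  · exact div_nonneg (log_nonneg (le_add_of_nonneg_right (by positivity))) (log_nonneg hα.le)
  · rw [neg_mul, pow_succ, ← mul_assoc]
    exact exp_neg_le_log_one_add_div_sub hα (by positivity)
end

section
/- For all real x > 0, the exponential integral E₁(x) = ∫_x^∞ e^{-w}/w dw satisfies E₁(x) ≤ e^{-x} · ln(1 + 1/x). -/
/-!
With `F w = exp (-w) * log (1 + 1 / w)` one has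
`-F' w = exp (-w) * (log (1 + 1 / w) + 1 / (w * (w + 1)))`, and `log (1 + 1 / w) ≥ 1 / (w + 1)`
turns this into `-F' w ≥ exp (-w) / w`. Since `F → 0` at infinity, integrating over `(x, ∞)`
gives `E₁(x) ≤ F x`.
-/

open Real MeasureTheory Set Filter Topology

theorem setIntegral_Ioi_le_of_le_deriv {f F F' : ℝ → ℝ} {a m : ℝ}
    (hderiv : ∀ x ∈ Ici a, HasDerivAt F (F' x) x) (hlim : Tendsto F atTop (𝓝 m))
    (hf_nonneg : ∀ x ∈ Ioi a, 0 ≤ f x) (hf_le : ∀ x ∈ Ioi a, f x ≤ F' x) :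
    ∫ x in Ioi a, f x ≤ m - F a := by
  have hF'_nonneg : ∀ x ∈ Ioi a, 0 ≤ F' x := fun x hx => (hf_nonneg x hx).trans (hf_le x hx)
  rw [← integral_Ioi_of_hasDerivAt_of_nonneg' hderiv hF'_nonneg hlim]
  exact integral_mono_of_nonneg (ae_restrict_of_forall_mem measurableSet_Ioi hf_nonneg)
    (integrableOn_Ioi_deriv_of_nonneg' hderiv hF'_nonneg hlim)
    (ae_restrict_of_forall_mem measurableSet_Ioi hf_le)

namespace Real

theorem inv_add_one_le_log_one_add_inv {w : ℝ} (hw : 0 < w) :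
    (w + 1)⁻¹ ≤ log (1 + w⁻¹) := by
  have h := one_sub_inv_le_log_of_pos (by positivity : 0 < 1 + w⁻¹)
  have hsub : 1 - (1 + w⁻¹)⁻¹ = (w + 1)⁻¹ := by field_simp; ring
  rwa [hsub] at h

theorem hasDerivAt_neg_exp_neg_mul_log_one_add_inv {w : ℝ} (hw : 0 < w) :
    HasDerivAt (fun w => -(exp (-w) * log (1 + w⁻¹)))
      (exp (-w) * (log (1 + w⁻¹) + (w * (w + 1))⁻¹)) w := by
  have hexp : HasDerivAt (fun w => exp (-w)) (-exp (-w)) w := by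
    simpa using (hasDerivAt_neg w).exp
  have hlog : HasDerivAt (fun w => log (1 + w⁻¹)) (-(w ^ 2)⁻¹ / (1 + w⁻¹)) w :=
    ((hasDerivAt_inv hw.ne').const_add 1).log (by positivity)
  refine (hexp.mul hlog).neg.congr_deriv ?_
  field_simp
  ring

theorem tendsto_exp_neg_mul_log_one_add_inv_atTop :
    Tendsto (fun w => exp (-w) * log (1 + w⁻¹)) atTop (𝓝 0) := by
  have hlog : Tendsto (fun w : ℝ => log (1 + w⁻¹)) atTop (𝓝 0) := by
    simpa [Function.comp_def] using
      (continuousAt_log (by norm_num : (1 : ℝ) + 0 ≠ 0)).tendsto.comp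
        (tendsto_inv_atTop_zero.const_add 1)
  simpa using tendsto_exp_neg_atTop_nhds_zero.mul hlog

theorem exp_neg_div_le_exp_neg_mul_log_one_add_inv_add {w : ℝ} (hw : 0 < w) :
    exp (-w) / w ≤ exp (-w) * (log (1 + w⁻¹) + (w * (w + 1))⁻¹) := by
  have hsplit : w⁻¹ = (w + 1)⁻¹ + (w * (w + 1))⁻¹ := by field_simp
  calc exp (-w) / w = exp (-w) * ((w + 1)⁻¹ + (w * (w + 1))⁻¹) := by
        rw [div_eq_mul_inv, hsplit]
    _ ≤ exp (-w) * (log (1 + w⁻¹) + (w * (w + 1))⁻¹) := by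
      gcongr
      exact inv_add_one_le_log_one_add_inv hw

end Real

theorem exponential_integral_bound (x : ℝ) (hx : 0 < x) :
    ∫ w in Set.Ioi x, Real.exp (-w) / w ≤ Real.exp (-x) * Real.log (1 + 1 / x) := by
  have h := setIntegral_Ioi_le_of_le_deriv
    (fun w hw => hasDerivAt_neg_exp_neg_mul_log_one_add_inv (hx.trans_le hw))
    tendsto_exp_neg_mul_log_one_add_inv_atTop.neg
    (fun w hw => (div_pos (exp_pos _) (hx.trans hw)).le)
    (fun w hw => exp_neg_div_le_exp_neg_mul_log_one_add_inv_add (hx.trans hw))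
  simpa using h
end

section
/- Let z be a complex number with |arg z| < π/3 and write √z for the principal square root. Then the change of variables t = √z + u gives -t³/3 + z·t = (2/3)·z^{3/2} - u³/3 - √z·u², and hence Hi(z)·exp(-(2/3)z^{3/2}) = π^{-1} ∫_{-√z}^∞ exp(-u³/3 - √z·u²) du, where the integral is over the contour from -√z to 0 and then along the positive real axis. -/
/-!
The substitution t = √z + u completes the cube, so Hi z · exp(-(2/3) z^{3/2}) is π⁻¹ times the
integral of the entire function F u = exp(-u³/3 - √z u²) along the horizontal ray starting at
-√z. Along every horizontal line the cubic term makes F decay like exp(-R³/3) as Re u = R → ∞,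
so Cauchy's theorem on the rectangles with opposite corners -√z and R, in the limit R → ∞,
replaces that ray by the vertical segment from -√z to -Re √z followed by the real ray from
-Re √z.
-/

open MeasureTheory

/-- The Scorer function `Hi`. -/
noncomputable def Hi (z : ℂ) : ℂ :=
  (Real.pi : ℂ)⁻¹ * ∫ t in Set.Ioi (0 : ℝ), Complex.exp (-(t : ℂ) ^ 3 / 3 + z * t)

open Complex Filter Set Topology

lemma eventually_neg_cube_add_quadratic_le_neg (c₂ c₁ c₀ : ℝ) :
    ∀ᶠ x in atTop, -x ^ 3 / 3 + c₂ * x ^ 2 + c₁ * x + c₀ ≤ -x := by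
  filter_upwards [eventually_ge_atTop (3 * (|c₂| + |c₁| + |c₀|) + 3)] with x hx
  nlinarith [le_abs_self c₂, le_abs_self c₁, le_abs_self c₀, abs_nonneg c₂, abs_nonneg c₁,
    abs_nonneg c₀, sq_nonneg x, mul_le_mul_of_nonneg_left hx (sq_nonneg x)]

lemma tendsto_exp_neg_cube_add_quadratic (c₂ c₁ c₀ : ℝ) :
    Tendsto (fun x => Real.exp (-x ^ 3 / 3 + c₂ * x ^ 2 + c₁ * x + c₀)) atTop (𝓝 0) :=
  Real.tendsto_exp_atBot.comp <| tendsto_atBot_mono' atTop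
    (eventually_neg_cube_add_quadratic_le_neg c₂ c₁ c₀) tendsto_neg_atTop_atBot

lemma integrableOn_Ioi_cexp_neg_cube_add_quadratic (p q r : ℂ) (a : ℝ) :
    IntegrableOn (fun x : ℝ => cexp (-(x : ℂ) ^ 3 / 3 + p * x ^ 2 + q * x + r)) (Ioi a) := by
  obtain ⟨M, hM⟩ :=
    (eventually_neg_cube_add_quadratic_le_neg p.re q.re r.re).exists_forall_of_atTop
  have hcont : Continuous fun x : ℝ => cexp (-(x : ℂ) ^ 3 / 3 + p * x ^ 2 + q * x + r) := by
    fun_prop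
  have htail : IntegrableOn (fun x : ℝ => cexp (-(x : ℂ) ^ 3 / 3 + p * x ^ 2 + q * x + r))
      (Ioi (max a M)) := by
    refine Integrable.mono' (exp_neg_integrableOn_Ioi _ one_pos)
      hcont.aestronglyMeasurable.restrict ?_
    filter_upwards [ae_restrict_mem measurableSet_Ioi] with x hx
    rw [norm_exp, neg_one_mul]
    refine Real.exp_le_exp.2 (le_of_eq_of_le ?_ (hM x (le_max_right a M |>.trans hx.le)))
    simp [← ofReal_pow]
  have := (hcont.continuousOn.integrableOn_Icc.mono_set
    (Ioc_subset_Icc_self (a := a) (b := max a M))).union htail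
  rwa [Ioc_union_Ioi_eq_Ioi (le_max_left a M)] at this

lemma integrableOn_Ioi_cexp_neg_cube_sub_mul_sq_comp_add (s c : ℂ) (a : ℝ) :
    IntegrableOn (fun x : ℝ => cexp (-(x + c) ^ 3 / 3 - s * (x + c) ^ 2)) (Ioi a) := by
  convert integrableOn_Ioi_cexp_neg_cube_add_quadratic (-c - s) (-c ^ 2 - 2 * s * c)
    (-c ^ 3 / 3 - s * c ^ 2) a using 3
  ring

lemma tendsto_integral_cexp_neg_cube_sub_mul_sq_vertical (s : ℂ) (b : ℝ) :
    Tendsto (fun R : ℝ => ∫ y in b..0, cexp (-(R + y * I) ^ 3 / 3 - s * (R + y * I) ^ 2))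
      atTop (𝓝 0) := by
  have hbound := (tendsto_exp_neg_cube_add_quadratic ‖s‖ (b ^ 2) (‖s‖ * b ^ 2)).mul_const |b|
  rw [zero_mul] at hbound
  refine squeeze_zero_norm' ?_ hbound
  filter_upwards [eventually_ge_atTop 0] with R hR
  refine (intervalIntegral.norm_integral_le_of_norm_le_const fun y hy => ?_).trans_eq
    (by rw [zero_sub, abs_neg])
  have hy2 : y ^ 2 ≤ b ^ 2 := by
    rcases mem_uIoc.mp hy with ⟨h₁, h₂⟩ | ⟨h₁, h₂⟩ <;> nlinarith
  have hcube : ((R + y * I : ℂ) ^ 3).re = R ^ 3 - 3 * R * y ^ 2 := by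
    simp [pow_succ, mul_re, mul_im]; ring
  have hquad : -(s * (R + y * I) ^ 2).re ≤ ‖s‖ * (R ^ 2 + y ^ 2) := by
    calc -(s * (R + y * I) ^ 2).re ≤ ‖s * (R + y * I) ^ 2‖ :=
          (neg_le_abs _).trans (abs_re_le_norm _)
      _ = ‖s‖ * (R ^ 2 + y ^ 2) := by rw [norm_mul, norm_pow, Complex.sq_norm, normSq_add_mul_I]
  rw [norm_exp, Real.exp_le_exp, sub_re, div_ofNat_re, neg_re, hcube]
  nlinarith [mul_le_mul_of_nonneg_left hy2 hR, mul_le_mul_of_nonneg_left hy2 (norm_nonneg s)]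

lemma setIntegral_Ioi_zero_comp_add (F : ℂ → ℂ) (w : ℂ) :
    ∫ t in Ioi (0 : ℝ), F (t + w) = ∫ x in Ioi w.re, F (x + w.im * I) := by
  have h := (measurePreserving_add_right volume w.re).setIntegral_preimage_emb
    (measurableEmbedding_addRight w.re) (fun x : ℝ => F (x + w.im * I)) (Ioi w.re)
  rw [preimage_add_const_Ioi, sub_self] at h
  rw [← h]
  refine setIntegral_congr_fun measurableSet_Ioi fun t _ => ?_
  congr 1
  apply Complex.ext <;> simp

lemma integral_Ioi_add_mul_I_eq (F : ℂ → ℂ) (hF : Differentiable ℂ F) (a b : ℝ)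
    (h_b : IntegrableOn (fun x : ℝ => F (x + b * I)) (Ioi a))
    (h_0 : IntegrableOn (fun x : ℝ => F x) (Ioi a))
    (hvert : Tendsto (fun R : ℝ => ∫ y in b..0, F (R + y * I)) atTop (𝓝 0)) :
    ∫ x in Ioi a, F (x + b * I) = (∫ x in Ioi a, F x) + I * ∫ y in b..0, F (a + y * I) := by
  have hrect : ∀ R : ℝ, ∫ x in a..R, F (x + b * I) = (∫ x in a..R, F x)
      + I * (∫ y in b..0, F (a + y * I)) - I * ∫ y in b..0, F (R + y * I) := by
    intro R
    have h := integral_boundary_rect_eq_zero_of_differentiableOn F (a + b * I) R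
      hF.differentiableOn
    simp only [add_re, ofReal_re, mul_re, I_re, I_im, ofReal_im, add_im, mul_im, smul_eq_mul,
      mul_zero, mul_one, sub_zero, zero_add, add_zero, ofReal_zero, zero_mul] at h
    linear_combination h
  refine tendsto_nhds_unique (intervalIntegral_tendsto_integral_Ioi a h_b tendsto_id) ?_
  simpa [hrect] using
    ((intervalIntegral_tendsto_integral_Ioi a h_0 tendsto_id).add_const _).sub
      (hvert.const_mul I)

lemma integral_Ioi_comp_add_eq_contour (F : ℂ → ℂ) (hF : Differentiable ℂ F) (w : ℂ)
    (h_w : IntegrableOn (fun x : ℝ => F (x + w.im * I)) (Ioi w.re))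
    (h_0 : IntegrableOn (fun x : ℝ => F x) (Ioi w.re))
    (hvert : Tendsto (fun R : ℝ => ∫ y in w.im..0, F (R + y * I)) atTop (𝓝 0)) :
    ∫ t in Ioi (0 : ℝ), F (t + w)
      = (∫ y in (0 : ℝ)..-w.im, I * F (w + I * y)) + ∫ x in Ioi w.re, F x := by
  rw [setIntegral_Ioi_zero_comp_add, integral_Ioi_add_mul_I_eq F hF _ _ h_w h_0 hvert,
    add_comm, intervalIntegral.integral_const_mul]
  congr 2
  have h := intervalIntegral.integral_comp_add_left (fun y : ℝ => F (w.re + y * I)) w.im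
    (a := 0) (b := -w.im)
  rw [add_zero, add_neg_cancel] at h
  rw [← h]
  refine intervalIntegral.integral_congr fun y _ => ?_
  congr 1
  apply Complex.ext <;> simp

lemma cpow_one_div_two_sq (z : ℂ) : (z ^ ((1 : ℂ) / 2)) ^ 2 = z := by
  rw [one_div, cpow_ofNat_inv_pow]

lemma cpow_three_div_two_eq_pow (z : ℂ) : z ^ ((3 : ℂ) / 2) = (z ^ ((1 : ℂ) / 2)) ^ 3 := by
  rw [← cpow_nat_mul]
  norm_num

theorem Hi_contour_representation_general (z : ℂ) :
    (∀ u : ℂ,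
      -(z ^ ((1 : ℂ) / 2) + u) ^ 3 / 3 + z * (z ^ ((1 : ℂ) / 2) + u)
        = 2 / 3 * z ^ ((3 : ℂ) / 2) - u ^ 3 / 3 - z ^ ((1 : ℂ) / 2) * u ^ 2) ∧
    Hi z * Complex.exp (-(2 / 3) * z ^ ((3 : ℂ) / 2))
      = (Real.pi : ℂ)⁻¹ *
        ((∫ y in (0 : ℝ)..(z ^ ((1 : ℂ) / 2)).im,
            Complex.I * Complex.exp (-(-(z ^ ((1 : ℂ) / 2)) + Complex.I * y) ^ 3 / 3
              - z ^ ((1 : ℂ) / 2) * (-(z ^ ((1 : ℂ) / 2)) + Complex.I * y) ^ 2)) +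
          ∫ x in Set.Ioi (-(z ^ ((1 : ℂ) / 2)).re),
            Complex.exp (-(x : ℂ) ^ 3 / 3 - z ^ ((1 : ℂ) / 2) * (x : ℂ) ^ 2)) := by
  have hsq := cpow_one_div_two_sq z
  have hcube := cpow_three_div_two_eq_pow z
  set s := z ^ ((1 : ℂ) / 2)
  have hexponent : ∀ u : ℂ, -(s + u) ^ 3 / 3 + z * (s + u)
      = 2 / 3 * z ^ ((3 : ℂ) / 2) - u ^ 3 / 3 - s * u ^ 2 := by
    intro u
    rw [hcube, ← hsq]
    ring
  refine ⟨hexponent, ?_⟩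
  set F : ℂ → ℂ := fun u => cexp (-u ^ 3 / 3 - s * u ^ 2)
  have hHi : Hi z * cexp (-(2 / 3) * z ^ ((3 : ℂ) / 2))
      = (Real.pi : ℂ)⁻¹ * ∫ t in Ioi (0 : ℝ), F (t + -s) := by
    rw [Hi, mul_assoc, ← integral_mul_const]
    refine congrArg _ (setIntegral_congr_fun measurableSet_Ioi fun t _ => ?_)
    rw [← exp_add]
    congr 1
    linear_combination hexponent (t - s)
  have h_w := integrableOn_Ioi_cexp_neg_cube_sub_mul_sq_comp_add s ((-s).im * I) (-s).re
  have h_0 := integrableOn_Ioi_cexp_neg_cube_sub_mul_sq_comp_add s 0 (-s).re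
  simp only [add_zero] at h_0
  rw [hHi, integral_Ioi_comp_add_eq_contour F (by fun_prop) (-s) h_w h_0
    (tendsto_integral_cexp_neg_cube_sub_mul_sq_vertical s _), neg_re, neg_im, neg_neg]

theorem Hi_contour_representation (z : ℂ) (hz : z ≠ 0) (harg : |z.arg| < Real.pi / 3) :
    (∀ u : ℂ,
      -(z ^ ((1 : ℂ) / 2) + u) ^ 3 / 3 + z * (z ^ ((1 : ℂ) / 2) + u)
        = 2 / 3 * z ^ ((3 : ℂ) / 2) - u ^ 3 / 3 - z ^ ((1 : ℂ) / 2) * u ^ 2) ∧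
    Hi z * Complex.exp (-(2 / 3) * z ^ ((3 : ℂ) / 2))
      = (Real.pi : ℂ)⁻¹ *
        ((∫ y in (0 : ℝ)..(z ^ ((1 : ℂ) / 2)).im,
            Complex.I * Complex.exp (-(-(z ^ ((1 : ℂ) / 2)) + Complex.I * y) ^ 3 / 3
              - z ^ ((1 : ℂ) / 2) * (-(z ^ ((1 : ℂ) / 2)) + Complex.I * y) ^ 2)) +
          ∫ x in Set.Ioi (-(z ^ ((1 : ℂ) / 2)).re),
            Complex.exp (-(x : ℂ) ^ 3 / 3 - z ^ ((1 : ℂ) / 2) * (x : ℂ) ^ 2)) :=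
  Hi_contour_representation_general z
end

section
/- Define g(v) = (2√2/(9√3))·Re((4 + 3iv)^{3/2} - (1 + 3iv)^{3/2} - 1) for v ≥ 0. Then g is monotone increasing on [0, ∞), and there exist constants 0 < c₁ ≤ c₂ such that c₁√v ≤ g(v) ≤ c₂√v for all v ≥ 1. -/
open Complex

lemma le_of_sq {x y : ℝ} (hx : 0 ≤ x) (hy : 0 ≤ y) (h : x^2 ≤ y^2) : x ≤ y := by
  rw [← Real.sqrt_sq hx, ← Real.sqrt_sq hy]
  exact Real.sqrt_le_sqrt h

lemma sqrt_parts {a w : ℝ} (ha : 0 < a) (hw : 0 ≤ w) :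
    (((a : ℂ) + (w : ℂ) * Complex.I) ^ ((1 : ℂ)/2)).re
      = Real.sqrt ((Real.sqrt (a^2 + w^2) + a)/2) ∧
    (((a : ℂ) + (w : ℂ) * Complex.I) ^ ((1 : ℂ)/2)).im
      = Real.sqrt ((Real.sqrt (a^2 + w^2) - a)/2) := by
  set z : ℂ := (a : ℂ) + (w : ℂ) * Complex.I with hzdef
  have hzre : z.re = a := by simp [hzdef]
  have hzim : z.im = w := by simp [hzdef]
  have hz : z ≠ 0 := by
    intro h
    rw [h] at hzre
    simp at hzre
    linarith
  set s : ℂ := z ^ ((1:ℂ)/2) with hsdef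
  have hmul : s * s = z := by
    rw [hsdef, ← Complex.cpow_add _ _ hz]; norm_num
  have hre2 : s.re * s.re - s.im * s.im = a := by
    have := congrArg Complex.re hmul
    rwa [Complex.mul_re, hzre] at this
  have habs : ‖z‖ = Real.sqrt (a^2 + w^2) := by
    rw [Complex.norm_def, Complex.normSq_apply, hzre, hzim]
    ring_nf
  have hsum : s.re * s.re + s.im * s.im = Real.sqrt (a^2 + w^2) := by
    have h1 : ‖s‖ * ‖s‖ = ‖z‖ := by
      rw [← norm_mul, hmul]
    have h2 : ‖s‖ * ‖s‖ = s.re * s.re + s.im * s.im := by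
      rw [← pow_two, Complex.sq_norm, Complex.normSq_apply]
    rw [← h2, h1, habs]
  have hexp : s = Complex.exp (Complex.log z * ((1:ℂ)/2)) := Complex.cpow_def_of_ne_zero hz _
  have him_arg : (Complex.log z * ((1:ℂ)/2)).im = Complex.arg z / 2 := by
    simp [Complex.mul_im, Complex.log_im]
    ring
  have harg_nonneg : 0 ≤ Complex.arg z := Complex.arg_nonneg_iff.2 (by rw [hzim]; exact hw)
  have harg_le : Complex.arg z ≤ Real.pi := Complex.arg_le_pi z
  have hsre_nonneg : 0 ≤ s.re := by
    rw [hexp, Complex.exp_re, him_arg]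
    apply mul_nonneg (Real.exp_nonneg _)
    apply Real.cos_nonneg_of_mem_Icc
    constructor
    · have := Real.pi_pos; linarith
    · linarith
  have hsim_nonneg : 0 ≤ s.im := by
    rw [hexp, Complex.exp_im, him_arg]
    apply mul_nonneg (Real.exp_nonneg _)
    apply Real.sin_nonneg_of_nonneg_of_le_pi
    · linarith
    · have := Real.pi_pos; linarith
  constructor
  · have h : s.re * s.re = (Real.sqrt (a^2 + w^2) + a)/2 := by linarith
    rw [show s.re = Real.sqrt (s.re * s.re) from (Real.sqrt_mul_self hsre_nonneg).symm, h]
  · have h : s.im * s.im = (Real.sqrt (a^2 + w^2) - a)/2 := by linarith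
    rw [show s.im = Real.sqrt (s.im * s.im) from (Real.sqrt_mul_self hsim_nonneg).symm, h]

lemma re32 {a w : ℝ} (ha : 0 < a) (hw : 0 ≤ w) :
    (((a : ℂ) + (w : ℂ) * Complex.I) ^ ((3 : ℂ)/2)).re
      = a * Real.sqrt ((Real.sqrt (a^2 + w^2) + a)/2)
        - w * Real.sqrt ((Real.sqrt (a^2 + w^2) - a)/2) := by
  have hz : ((a : ℂ) + (w : ℂ) * Complex.I) ≠ 0 := by
    intro h
    have h2 : ((a : ℂ) + (w : ℂ) * Complex.I).re = a := by simp
    rw [h] at h2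
    simp at h2
    linarith
  have h32 : ((3:ℂ)/2) = 1 + 1/2 := by norm_num
  rw [h32, Complex.cpow_add _ _ hz, Complex.cpow_one, Complex.mul_re]
  rw [(sqrt_parts ha hw).1, (sqrt_parts ha hw).2]
  simp

lemma hasDeriv_aux (c : ℂ) (hc : 0 < c.re) (v : ℝ) :
    HasDerivAt (fun w : ℂ => (c + 3 * w * Complex.I) ^ ((3:ℂ)/2))
      ((3:ℂ)/2 * (c + 3*(v:ℂ)*Complex.I) ^ ((3:ℂ)/2 - 1) * (3*Complex.I)) (v:ℂ) := by
  have h1 : HasDerivAt (fun w : ℂ => c + 3 * w * Complex.I) (3*Complex.I) (v:ℂ) := by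
    have := ((hasDerivAt_id ((v:ℝ):ℂ)).const_mul (3:ℂ)).mul_const Complex.I
    simpa using this.const_add c
  exact h1.cpow_const (by
    simp only [Complex.mem_slitPlane_iff]
    left
    simpa [Complex.add_re, Complex.mul_re] using hc)

set_option maxHeartbeats 1000000 in
theorem g_monotone_and_sqrt_growth
    (g : ℝ → ℝ)
    (hg : ∀ v : ℝ, g v = 2 * Real.sqrt 2 / (9 * Real.sqrt 3) *
        (((4 + 3 * v * Complex.I) ^ ((3 : ℂ) / 2)
          - (1 + 3 * v * Complex.I) ^ ((3 : ℂ) / 2) - 1).re)) :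
    MonotoneOn g (Set.Ici (0 : ℝ)) ∧
    ∃ c₁ c₂ : ℝ, 0 < c₁ ∧ c₁ ≤ c₂ ∧
      ∀ v : ℝ, 1 ≤ v → c₁ * Real.sqrt v ≤ g v ∧ g v ≤ c₂ * Real.sqrt v := by
  set C : ℝ := 2 * Real.sqrt 2 / (9 * Real.sqrt 3) with hCdef
  have hC : 0 < C := by
    apply div_pos <;> positivity
  have hD : ∀ v : ℝ, HasDerivAt g (C *
      (((3:ℂ)/2 * (4 + 3*(v:ℂ)*Complex.I) ^ ((3:ℂ)/2 - 1) * (3*Complex.I)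
        - (3:ℂ)/2 * (1 + 3*(v:ℂ)*Complex.I) ^ ((3:ℂ)/2 - 1) * (3*Complex.I)).re)) v := by
    intro v
    have hgeq : g = fun v : ℝ => C *
        ((((4:ℂ) + 3 * (v:ℂ) * Complex.I) ^ ((3:ℂ)/2)
          - ((1:ℂ) + 3*(v:ℂ)*Complex.I) ^ ((3:ℂ)/2) - 1).re) := funext hg
    rw [hgeq]
    have h4 := hasDeriv_aux 4 (by norm_num) v
    have h1 := hasDeriv_aux 1 (by norm_num) v
    exact (((h4.sub h1).sub_const 1).real_of_complex).const_mul C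
  have hdiff : Differentiable ℝ g := fun v => (hD v).differentiableAt
  have key_re : ∀ u : ℂ, ((3:ℂ)/2 * u * (3*Complex.I)).re = -((9:ℝ)/2 * u.im) := by
    intro u
    have h : (3:ℂ)/2 * u * (3*Complex.I) = (((9:ℝ)/2 : ℝ):ℂ) * (u * Complex.I) := by
      push_cast; ring
    rw [h, Complex.re_ofReal_mul, Complex.mul_re, Complex.I_re, Complex.I_im]
    ring
  constructor
  · -- monotonicity
    apply monotoneOn_of_deriv_nonneg (convex_Ici 0) hdiff.continuous.continuousOn
      hdiff.differentiableOn
    intro x hx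
    rw [interior_Ici] at hx
    have hx0 : (0:ℝ) ≤ x := le_of_lt hx
    have h3x : (0:ℝ) ≤ 3 * x := by linarith
    rw [(hD x).deriv]
    have hc4 : ((4:ℂ) + 3*(x:ℂ)*Complex.I) = (((4:ℝ):ℂ) + ((3*x : ℝ):ℂ) * Complex.I) := by
      push_cast; ring
    have hc1 : ((1:ℂ) + 3*(x:ℂ)*Complex.I) = (((1:ℝ):ℂ) + ((3*x : ℝ):ℂ) * Complex.I) := by
      push_cast; ring
    have hexp : ((3:ℂ)/2 - 1) = (1:ℂ)/2 := by norm_num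
    have h4 := (sqrt_parts (a := 4) (w := 3*x) (by norm_num) h3x).2
    have h1 := (sqrt_parts (a := 1) (w := 3*x) (by norm_num) h3x).2
    rw [Complex.sub_re, key_re, key_re, hexp, hc4, hc1, h4, h1]
    set A4 := Real.sqrt ((4:ℝ)^2 + (3*x)^2) with hA4
    set A1 := Real.sqrt ((1:ℝ)^2 + (3*x)^2) with hA1
    have nA4 : 0 ≤ A4 := Real.sqrt_nonneg _
    have nA1 : 0 ≤ A1 := Real.sqrt_nonneg _
    have eA4 : A4^2 = (4:ℝ)^2 + (3*x)^2 := Real.sq_sqrt (by positivity)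
    have eA1 : A1^2 = (1:ℝ)^2 + (3*x)^2 := Real.sq_sqrt (by positivity)
    have h1le : 1 ≤ A1 := le_of_sq zero_le_one nA1 (by rw [eA1]; nlinarith)
    have hle : A4 ≤ A1 + 3 := le_of_sq nA4 (by linarith) (by nlinarith)
    have hYle : Real.sqrt ((A4 - 4)/2) ≤ Real.sqrt ((A1 - 1)/2) :=
      Real.sqrt_le_sqrt (by linarith)
    apply mul_nonneg hC.le
    linarith
  · -- growth bounds
    refine ⟨C, 15 * C, hC, by linarith, ?_⟩
    intro v hv
    have hv0 : (0:ℝ) ≤ 3 * v := by linarith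
    have hc4 : ((4:ℂ) + 3*(v:ℂ)*Complex.I) = (((4:ℝ):ℂ) + ((3*v : ℝ):ℂ) * Complex.I) := by
      push_cast; ring
    have hc1 : ((1:ℂ) + 3*(v:ℂ)*Complex.I) = (((1:ℝ):ℂ) + ((3*v : ℝ):ℂ) * Complex.I) := by
      push_cast; ring
    have hgv : g v = C * (4 * Real.sqrt ((Real.sqrt ((4:ℝ)^2 + (3*v)^2) + 4)/2)
        - (3*v) * Real.sqrt ((Real.sqrt ((4:ℝ)^2 + (3*v)^2) - 4)/2)
        - (1 * Real.sqrt ((Real.sqrt ((1:ℝ)^2 + (3*v)^2) + 1)/2)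
            - (3*v) * Real.sqrt ((Real.sqrt ((1:ℝ)^2 + (3*v)^2) - 1)/2)) - 1) := by
      rw [hg v]
      congr 1
      rw [Complex.sub_re, Complex.sub_re, Complex.one_re, hc4, hc1,
        re32 (by norm_num) hv0, re32 (by norm_num) hv0]
    set s := Real.sqrt v with hsdef
    set r4 := Real.sqrt ((4:ℝ)^2 + (3*v)^2) with hr4def
    set r1 := Real.sqrt ((1:ℝ)^2 + (3*v)^2) with hr1def
    set X4 := Real.sqrt ((r4 + 4)/2) with hX4def
    set Y4 := Real.sqrt ((r4 - 4)/2) with hY4def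
    set X1 := Real.sqrt ((r1 + 1)/2) with hX1def
    set Y1 := Real.sqrt ((r1 - 1)/2) with hY1def
    have hs1 : 1 ≤ s := by
      rw [hsdef, show (1:ℝ) = Real.sqrt 1 from (Real.sqrt_one).symm]
      exact Real.sqrt_le_sqrt hv
    have hs2 : s^2 = v := Real.sq_sqrt (by linarith)
    have er4 : r4^2 = 4^2 + (3*v)^2 := Real.sq_sqrt (by positivity)
    have er1 : r1^2 = 1^2 + (3*v)^2 := Real.sq_sqrt (by positivity)
    have nr4 : 0 ≤ r4 := Real.sqrt_nonneg _
    have nr1 : 0 ≤ r1 := Real.sqrt_nonneg _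
    have h1r1 : 1 ≤ r1 := by nlinarith
    have hr14 : r1 ≤ r4 := by
      rw [hr1def, hr4def]; apply Real.sqrt_le_sqrt; nlinarith
    have hr43 : r4 ≤ r1 + 3 := le_of_sq nr4 (by linarith) (by nlinarith)
    have hr4lb : 3 * v ≤ r4 := le_of_sq hv0 nr4 (by nlinarith)
    have hr1lb : 3 * v ≤ r1 := le_of_sq hv0 nr1 (by nlinarith)
    have hr4ub : r4 ≤ 4 + 3*v := le_of_sq nr4 (by linarith) (by nlinarith)
    have eX4 : X4^2 = (r4+4)/2 := Real.sq_sqrt (by linarith)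
    have eY4 : Y4^2 = (r4-4)/2 := Real.sq_sqrt (by nlinarith)
    have eX1 : X1^2 = (r1+1)/2 := Real.sq_sqrt (by linarith)
    have eY1 : Y1^2 = (r1-1)/2 := Real.sq_sqrt (by linarith)
    have nX4 : 0 ≤ X4 := Real.sqrt_nonneg _
    have nY4 : 0 ≤ Y4 := Real.sqrt_nonneg _
    have nX1 : 0 ≤ X1 := Real.sqrt_nonneg _
    have nY1 : 0 ≤ Y1 := Real.sqrt_nonneg _
    have hY14 : Y4 ≤ Y1 := by
      rw [hY4def, hY1def]; apply Real.sqrt_le_sqrt; linarith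
    have hX14 : X1 ≤ X4 := by
      rw [hX1def, hX4def]; apply Real.sqrt_le_sqrt; linarith
    clear_value X4 Y4 X1 Y1
    clear_value r4 r1
    clear_value s
    clear hD hdiff key_re hg hc4 hc1 hr4def hr1def hX4def hY4def hX1def hY1def hsdef
    -- lower estimate pieces
    have hX4lb : s + 1 ≤ 3 * X4 :=
      le_of_sq (by linarith) (by linarith) (by nlinarith [sq_nonneg (s-1)])
    -- upper estimate pieces
    have hX4ub : 4 * X4 ≤ 10 * s :=
      le_of_sq (by linarith) (by linarith) (by nlinarith)
    have hY1lb : s ≤ Y1 := le_of_sq (by linarith) nY1 (by nlinarith)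
    have hYdub : (Y1 - Y4) * s ≤ 3/2 := by
      have hm : (Y1 - Y4) * s ≤ (Y1 - Y4) * (Y1 + Y4) :=
        mul_le_mul_of_nonneg_left (by linarith) (by linarith)
      nlinarith [hm, eY1, eY4, hr14]
    have hprod : 3 * v * (Y1 - Y4) ≤ (9/2) * s := by
      have h1 : 3 * v * (Y1 - Y4) = 3 * s * ((Y1 - Y4) * s) := by
        rw [← hs2]; ring
      rw [h1]
      have h2 := mul_le_mul_of_nonneg_left hYdub (show (0:ℝ) ≤ 3 * s by linarith)
      linarith
    constructor
    · rw [hgv]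
      have h0 : 0 ≤ 3 * v * (Y1 - Y4) := mul_nonneg hv0 (by linarith)
      have hkey : s ≤ 4 * X4 - (3*v) * Y4 - (1 * X1 - (3*v) * Y1) - 1 := by linarith
      calc C * s ≤ C * (4 * X4 - (3*v) * Y4 - (1 * X1 - (3*v) * Y1) - 1) :=
            mul_le_mul_of_nonneg_left hkey hC.le
        _ = _ := rfl
    · rw [hgv]
      have hkey : 4 * X4 - (3*v) * Y4 - (1 * X1 - (3*v) * Y1) - 1 ≤ 15 * s := by linarith
      calc C * (4 * X4 - (3*v) * Y4 - (1 * X1 - (3*v) * Y1) - 1) ≤ C * (15 * s) :=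
            mul_le_mul_of_nonneg_left hkey hC.le
        _ = 15 * C * s := by ring
end
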